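/- arXiv:2404.11377 — 5 statements merged into one kernel-verified Lean document; each statement's English description precedes it below -/
import Mathlib

section
/- Let g : ℝᵠ → ℝ be μ-strongly convex and L-smooth with minimizer y*, let 0 < λ ≤ 1/(2L + 2μ), let y ∈ ℝᵠ, let D ∈ ℝᵠ be an arbitrary direction, and set ỹ = y - λD. Then ⟨D, y* - ỹ⟩ ≤ (2/μ)‖∇g(y) - D‖² - (μ/4)‖y* - y‖² + (λ/4)‖D‖². -/
/-!
Strong convexity makes the gradient strongly monotone, `μ ‖y - y*‖² ≤ ⟪∇g(y), y - y*⟫`, and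
convexity together with `L`-smoothness makes it co-coercive (Baillon–Haddad),
`‖∇g(y)‖² ≤ L ⟪∇g(y), y - y*⟫`, since `∇g(y*) = 0`. Writing `⟪D, y* - ỹ⟫ = λ‖D‖² - ⟪D, y - y*⟫`
and `D = ∇g(y) - e`, the term `λ‖D‖² ≲ λ‖∇g(y)‖² + λ‖e‖²` is absorbed by co-coercivity (this is
where `λ ≤ 1/(2L + 2μ)` enters), and the cross term `⟪e, y - y*⟫` by Young's inequality against
strong monotonicity.
-/

open scoped RealInnerProductSpace

section InnerProduct

variable {E : Type*} [NormedAddCommGroup E] [InnerProductSpace ℝ E]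

theorem mul_norm_sub_sq_le_inner_of_strongConvex {f : E → ℝ} {F : E → E} {μ : ℝ}
    (hsc : ∀ y z, f z ≥ f y + ⟪F y, z - y⟫ + μ / 2 * ‖z - y‖ ^ 2) (a b : E) :
    μ * ‖a - b‖ ^ 2 ≤ ⟪F a - F b, a - b⟫ := by
  have hab := hsc a b
  have hba := hsc b a
  rw [norm_sub_rev, ← neg_sub a b, inner_neg_right] at hab
  rw [inner_sub_left]
  linarith

theorem le_of_strongMono_of_lipschitz [Nontrivial E] {F : E → E} {μ L : ℝ}
    (hmono : ∀ a b, μ * ‖a - b‖ ^ 2 ≤ ⟪F a - F b, a - b⟫)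
    (hlip : ∀ u w, ‖F u - F w‖ ≤ L * ‖u - w‖) : μ ≤ L := by
  obtain ⟨u, hu⟩ := exists_ne (0 : E)
  have hpos : 0 < ‖u‖ ^ 2 := pow_pos (norm_pos_iff.mpr hu) 2
  refine le_of_mul_le_mul_right ?_ hpos
  calc μ * ‖u‖ ^ 2 ≤ ⟪F u - F 0, u⟫ := by simpa using hmono u 0
    _ ≤ ‖F u - F 0‖ * ‖u‖ := real_inner_le_norm _ _
    _ ≤ L * ‖u‖ * ‖u‖ := by gcongr; simpa using hlip u 0
    _ = L * ‖u‖ ^ 2 := by ring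

theorem inner_smul_sub_le_of_strongMono_of_cocoercive {G D u : E} {μ L lam : ℝ} (hμ : 0 < μ)
    (hμL : μ ≤ L) (hlam : 0 ≤ lam) (hlam' : lam ≤ 1 / (2 * L + 2 * μ))
    (hmono : μ * ‖u‖ ^ 2 ≤ ⟪G, u⟫) (hcoco : ‖G‖ ^ 2 ≤ L * ⟪G, u⟫) :
    ⟪D, lam • D - u⟫ ≤ 2 / μ * ‖G - D‖ ^ 2 - μ / 4 * ‖u‖ ^ 2 + lam / 4 * ‖D‖ ^ 2 := by
  have hlam_mul : lam * (2 * L + 2 * μ) ≤ 1 := (le_div_iff₀ (by linarith)).mp hlam'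
  have hsplit : ⟪D, lam • D - u⟫ ≤ lam * ‖D‖ ^ 2 - ⟪G, u⟫ + ‖G - D‖ * ‖u‖ := by
    have hcs := real_inner_le_norm (G - D) u
    rw [inner_sub_left] at hcs
    rw [inner_sub_right, real_inner_smul_right, real_inner_self_eq_norm_sq]
    linarith
  -- `‖D‖² ≤ (1 + s)‖G‖² + (1 + 1/s)‖G - D‖²` with `s = 1/3`, so that `hG` absorbs the `‖G‖²` part
  have hD : 3 * ‖D‖ ^ 2 ≤ 4 * ‖G‖ ^ 2 + 12 * ‖G - D‖ ^ 2 := by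
    have htri : ‖D‖ ≤ ‖G‖ + ‖G - D‖ := by simpa using norm_sub_le G (G - D)
    nlinarith [norm_nonneg D, sq_nonneg (‖G‖ - 3 * ‖G - D‖)]
  have hG : 2 * lam * ‖G‖ ^ 2 ≤ ⟪G, u⟫ := by
    have hP : 0 ≤ ⟪G, u⟫ := le_trans (by positivity) hmono
    nlinarith [mul_le_mul_of_nonneg_left hcoco hlam]
  have he : 4 * μ * lam * ‖G - D‖ ^ 2 ≤ ‖G - D‖ ^ 2 := by
    have : 4 * μ * lam ≤ 1 := by nlinarith
    nlinarith [sq_nonneg ‖G - D‖]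
  have hyoung : μ * (‖G - D‖ * ‖u‖) ≤ ‖G - D‖ ^ 2 + μ ^ 2 / 4 * ‖u‖ ^ 2 := by
    nlinarith [sq_nonneg (‖G - D‖ - μ / 2 * ‖u‖)]
  refine le_of_mul_le_mul_left ?_ hμ
  have hμinv : μ * (2 / μ * ‖G - D‖ ^ 2) = 2 * ‖G - D‖ ^ 2 := by field_simp
  nlinarith [mul_le_mul_of_nonneg_left hsplit hμ.le, mul_le_mul_of_nonneg_left hD
    (mul_nonneg hμ.le hlam), mul_le_mul_of_nonneg_left hG hμ.le,
    mul_le_mul_of_nonneg_left hmono hμ.le]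

end InnerProduct

section Gradient

variable {E : Type*} [NormedAddCommGroup E] [InnerProductSpace ℝ E] [CompleteSpace E]
  {f : E → ℝ} {F : E → E}

theorem HasGradientAt.hasDerivAt_comp_add_smul {x v : E} {t : ℝ}
    (h : HasGradientAt f (F (x + t • v)) (x + t • v)) :
    HasDerivAt (fun s : ℝ => f (x + s • v)) ⟪F (x + t • v), v⟫ t := by
  have hline : HasDerivAt (fun s : ℝ => x + s • v) v t := by
    simpa using ((hasDerivAt_id t).smul_const v).const_add x
  simpa [Function.comp_def] using h.hasFDerivAt.comp_hasDerivAt t hline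

/-- The descent lemma. -/
theorem add_le_of_hasGradientAt_of_lipschitz {C : ℝ} (hgrad : ∀ x, HasGradientAt f (F x) x)
    (hlip : ∀ u w, ‖F u - F w‖ ≤ C * ‖u - w‖) (x v : E) :
    f (x + v) ≤ f x + ⟪F x, v⟫ + C / 2 * ‖v‖ ^ 2 := by
  set φ : ℝ → ℝ := fun t => f (x + t • v) - t * ⟪F x, v⟫ - C * ‖v‖ ^ 2 * t ^ 2 / 2
  have hφ' : ∀ t : ℝ, HasDerivAt φ (⟪F (x + t • v), v⟫ - ⟪F x, v⟫ - C * ‖v‖ ^ 2 * t) t := by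
    intro t
    have hsq : HasDerivAt (fun t : ℝ => C * ‖v‖ ^ 2 * t ^ 2 / 2) (C * ‖v‖ ^ 2 * t) t := by
      refine (((hasDerivAt_pow 2 t).const_mul (C * ‖v‖ ^ 2)).div_const 2).congr_deriv ?_
      push_cast; ring
    exact (((hgrad _).hasDerivAt_comp_add_smul).sub
      ((hasDerivAt_id t).mul_const ⟪F x, v⟫ |>.congr_deriv (one_mul _))).sub hsq
  have hanti : AntitoneOn φ (Set.Ici 0) := by
    refine antitoneOn_of_deriv_nonpos (convex_Ici 0)
      (fun t _ => (hφ' t).continuousAt.continuousWithinAt)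
      (fun t _ => (hφ' t).differentiableAt.differentiableWithinAt) fun t ht => ?_
    rw [interior_Ici, Set.mem_Ioi] at ht
    rw [(hφ' t).deriv, sub_nonpos, ← inner_sub_left]
    calc ⟪F (x + t • v) - F x, v⟫ ≤ ‖F (x + t • v) - F x‖ * ‖v‖ := real_inner_le_norm _ _
      _ ≤ C * ‖(x + t • v) - x‖ * ‖v‖ := by gcongr; exact hlip _ _
      _ = C * ‖v‖ ^ 2 * t := by
        rw [add_sub_cancel_left, norm_smul, Real.norm_of_nonneg ht.le]; ring
  have h01 := hanti Set.self_mem_Ici (Set.mem_Ici.mpr zero_le_one) zero_le_one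
  simp only [φ, zero_smul, add_zero, one_smul, zero_mul, sub_zero, one_mul] at h01
  linarith

theorem norm_sub_sq_le_of_convex_of_lipschitz {L : ℝ} (hgrad : ∀ x, HasGradientAt f (F x) x)
    (hconv : ∀ w z, f w + ⟪F w, z - w⟫ ≤ f z) (hlip : ∀ u w, ‖F u - F w‖ ≤ L * ‖u - w‖)
    (hL : 0 < L) (a b : E) :
    ‖F a - F b‖ ^ 2 ≤ 2 * L * (f a - f b - ⟪F b, a - b⟫) := by
  -- descend from `a` by a gradient step of length `1/L` for `f - ⟪F b, ·⟫`
  set v := -L⁻¹ • (F a - F b)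
  have hdesc := add_le_of_hasGradientAt_of_lipschitz hgrad hlip a v
  have hsupp := hconv b (a + v)
  have hstep : ⟪F a - F b, v⟫ = -L⁻¹ * ‖F a - F b‖ ^ 2 := by
    rw [real_inner_smul_right, real_inner_self_eq_norm_sq]
  have hv : L / 2 * ‖v‖ ^ 2 = L⁻¹ / 2 * ‖F a - F b‖ ^ 2 := by
    rw [norm_smul, mul_pow, norm_neg, Real.norm_of_nonneg (inv_nonneg.mpr hL.le)]
    field_simp
  rw [add_sub_right_comm, inner_add_right] at hsupp
  rw [inner_sub_left] at hstep
  have hgap : L⁻¹ / 2 * ‖F a - F b‖ ^ 2 ≤ f a - f b - ⟪F b, a - b⟫ := by linarith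
  calc ‖F a - F b‖ ^ 2 = 2 * L * (L⁻¹ / 2 * ‖F a - F b‖ ^ 2) := by field_simp
    _ ≤ 2 * L * (f a - f b - ⟪F b, a - b⟫) := by gcongr

theorem norm_sub_sq_le_inner_of_convex_of_lipschitz {L : ℝ}
    (hgrad : ∀ x, HasGradientAt f (F x) x) (hconv : ∀ w z, f w + ⟪F w, z - w⟫ ≤ f z)
    (hlip : ∀ u w, ‖F u - F w‖ ≤ L * ‖u - w‖) (hL : 0 < L) (x y : E) :
    ‖F x - F y‖ ^ 2 ≤ L * ⟪F x - F y, x - y⟫ := by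
  have hxy := norm_sub_sq_le_of_convex_of_lipschitz hgrad hconv hlip hL x y
  have hyx := norm_sub_sq_le_of_convex_of_lipschitz hgrad hconv hlip hL y x
  rw [norm_sub_rev, ← neg_sub x y, inner_neg_right] at hyx
  rw [inner_sub_left]
  linarith

theorem IsLocalMin.hasGradientAt_eq_zero {x f' : E} (hmin : IsLocalMin f x)
    (h : HasGradientAt f f' x) : f' = 0 :=
  (map_eq_zero_iff _ (InnerProductSpace.toDual ℝ E).injective).mp
    (hmin.hasFDerivAt_eq_zero h.hasFDerivAt)

end Gradient

theorem stmt_2 {q : ℕ} (g : EuclideanSpace ℝ (Fin q) → ℝ)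
    (gradg : EuclideanSpace ℝ (Fin q) → EuclideanSpace ℝ (Fin q))
    (hgrad : ∀ y, HasGradientAt g (gradg y) y)
    (μ L : ℝ) (hμ : 0 < μ)
    (hsc : ∀ y z, g z ≥ g y + ⟪gradg y, z - y⟫ + (μ / 2) * ‖z - y‖ ^ 2)
    (hsmooth : ∀ u w, ‖gradg u - gradg w‖ ≤ L * ‖u - w‖)
    (ystar : EuclideanSpace ℝ (Fin q)) (hmin : ∀ z, g ystar ≤ g z)
    (lam : ℝ) (hlam : 0 < lam) (hlam' : lam ≤ 1 / (2 * L + 2 * μ))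
    (y D ytil : EuclideanSpace ℝ (Fin q)) (hytil : ytil = y - lam • D) :
    ⟪D, ystar - ytil⟫ ≤ (2 / μ) * ‖gradg y - D‖ ^ 2
      - (μ / 4) * ‖ystar - y‖ ^ 2 + (lam / 4) * ‖D‖ ^ 2 := by
  rcases subsingleton_or_nontrivial (EuclideanSpace ℝ (Fin q)) with hE | hE
  · simp [Subsingleton.elim D 0, Subsingleton.elim ystar y, Subsingleton.elim (gradg y) 0]
  have hmono := mul_norm_sub_sq_le_inner_of_strongConvex hsc
  have hμL := le_of_strongMono_of_lipschitz hmono hsmooth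
  have hconv : ∀ w z, g w + ⟪gradg w, z - w⟫ ≤ g z := fun w z => by
    linarith [hsc w z, show 0 ≤ μ / 2 * ‖z - w‖ ^ 2 by positivity]
  have hstar : gradg ystar = 0 :=
    IsLocalMin.hasGradientAt_eq_zero (Filter.Eventually.of_forall hmin) (hgrad ystar)
  have hcoco := norm_sub_sq_le_inner_of_convex_of_lipschitz hgrad hconv hsmooth
    (hμ.trans_le hμL) y ystar
  have hmono_y := hmono y ystar
  rw [hstar, sub_zero] at hcoco hmono_y
  rw [hytil, show ystar - (y - lam • D) = lam • D - (y - ystar) by abel, norm_sub_rev ystar y]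
  exact inner_smul_sub_le_of_strongMono_of_cocoercive hμ hμL hlam.le hlam' hmono_y hcoco
end

section
/- Let g : ℝᵠ → ℝ be μ-strongly convex and L-smooth with minimizer y*, let 0 < λ ≤ 1/(2L + 2μ) and 0 < β < 1, let y ∈ ℝᵠ, let D ∈ ℝᵠ, and set y⁺ = y - λβD. Then ‖y⁺ - y*‖² ≤ (1 - (μ/2)λβ)‖y - y*‖² - (1/2)λ²β‖D‖² + (4/μ)λβ‖∇g(y) - D‖². -/
/-!
Write `r = y - y*`, `G = ∇g(y)` and `e = G - D`. Expanding the square,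
`‖y⁺ - y*‖² = ‖r‖² - 2λβ (⟪G, r⟫ - ⟪e, r⟫) + λ²β² ‖D‖²`.
Strong convexity gives `μ ‖r‖² ≤ ⟪G, r⟫`, and since `∇g(y*) = 0`, two applications of the descent
lemma give the co-coercivity bound `‖G‖² ≤ L ⟪G, r⟫`. The error term `⟪e, r⟫` is absorbed by
Young's inequality, and `‖D‖² ≤ (‖G‖ + ‖e‖)² ≤ (L + μ) (‖G‖² / L + ‖e‖² / μ)` by Cauchy–Schwarz;
the step-size condition `λ (L + μ) ≤ 1/2` makes the remaining terms fit.
-/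

open scoped RealInnerProductSpace

section InnerProductSpace

variable {E : Type*} [NormedAddCommGroup E] [InnerProductSpace ℝ E] {g : E → ℝ} {g' : E → E}

theorem mul_norm_sub_sq_le_inner_sub_of_strongConvex {μ : ℝ}
    (hsc : ∀ y z, g z ≥ g y + ⟪g' y, z - y⟫ + (μ / 2) * ‖z - y‖ ^ 2) (x y : E) :
    μ * ‖x - y‖ ^ 2 ≤ ⟪g' x - g' y, x - y⟫ := by
  have hxy := hsc y x
  have hyx := hsc x y
  rw [← neg_sub x y, inner_neg_right, norm_neg] at hyx
  rw [inner_sub_left]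
  linarith

theorem le_of_strongConvex_of_lipschitz_gradient [Nontrivial E] {μ L : ℝ}
    (hsc : ∀ y z, g z ≥ g y + ⟪g' y, z - y⟫ + (μ / 2) * ‖z - y‖ ^ 2)
    (hsmooth : ∀ u w, ‖g' u - g' w‖ ≤ L * ‖u - w‖) : μ ≤ L := by
  obtain ⟨u, hu⟩ := exists_ne (0 : E)
  have hmono := mul_norm_sub_sq_le_inner_sub_of_strongConvex hsc u 0
  rw [sub_zero] at hmono
  refine le_of_mul_le_mul_right ?_ (pow_pos (norm_pos_iff.mpr hu) 2)
  calc μ * ‖u‖ ^ 2 ≤ ⟪g' u - g' 0, u⟫ := hmono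
    _ ≤ ‖g' u - g' 0‖ * ‖u‖ := real_inner_le_norm _ _
    _ ≤ L * ‖u‖ * ‖u‖ := by gcongr; simpa using hsmooth u 0
    _ = L * ‖u‖ ^ 2 := by ring

theorem le_add_inner_add_of_lipschitz_gradient [CompleteSpace E] {L : ℝ}
    (hgrad : ∀ x, HasGradientAt g (g' x) x)
    (hsmooth : ∀ u w, ‖g' u - g' w‖ ≤ L * ‖u - w‖) (w v : E) :
    g (w + v) ≤ g w + ⟪g' w, v⟫ + L / 2 * ‖v‖ ^ 2 := by
  set φ : ℝ → ℝ := fun t => g (w + t • v) - t * ⟪g' w, v⟫ - L / 2 * t ^ 2 * ‖v‖ ^ 2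
  have hφ : ∀ t, HasDerivAt φ (⟪g' (w + t • v) - g' w, v⟫ - L * t * ‖v‖ ^ 2) t := by
    intro t
    have hline : HasDerivAt (fun t : ℝ => w + t • v) v t := by
      simpa using ((hasDerivAt_id t).smul_const v).const_add w
    have hg : HasDerivAt (fun t : ℝ => g (w + t • v)) ⟪g' (w + t • v), v⟫ t :=
      (hgrad _).hasFDerivAt.comp_hasDerivAt t hline
    refine ((hg.sub ((hasDerivAt_id t).mul_const ⟪g' w, v⟫)).sub
      (((hasDerivAt_pow 2 t).const_mul (L / 2)).mul_const (‖v‖ ^ 2))).congr_deriv ?_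
    simp only [inner_sub_left]
    ring
  have hanti : AntitoneOn φ (Set.Ici 0) := by
    refine antitoneOn_of_hasDerivWithinAt_nonpos (convex_Ici 0)
      (fun t _ => (hφ t).continuousAt.continuousWithinAt) (fun t _ => (hφ t).hasDerivWithinAt) ?_
    intro t ht
    rw [interior_Ici, Set.mem_Ioi] at ht
    rw [sub_nonpos]
    calc ⟪g' (w + t • v) - g' w, v⟫ ≤ ‖g' (w + t • v) - g' w‖ * ‖v‖ := real_inner_le_norm _ _
      _ ≤ L * ‖t • v‖ * ‖v‖ := by gcongr; simpa using hsmooth (w + t • v) w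
      _ = L * t * ‖v‖ ^ 2 := by rw [norm_smul, Real.norm_of_nonneg ht.le]; ring
  have := hanti Set.self_mem_Ici (Set.mem_Ici.mpr zero_le_one) zero_le_one
  simp only [φ, one_smul, one_mul, one_pow, mul_one, zero_smul, add_zero, zero_mul, sub_zero,
    ne_eq, OfNat.ofNat_ne_zero, not_false_eq_true, zero_pow, mul_zero] at this
  linarith

theorem IsLocalMin.hasGradientAt_eq_zero_s3 [CompleteSpace E] {x₀ G : E}
    (hmin : IsLocalMin g x₀) (hG : HasGradientAt g G x₀) : G = 0 :=
  (InnerProductSpace.toDual ℝ E).injective <| by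
    rw [hmin.hasFDerivAt_eq_zero hG.hasFDerivAt, map_zero]

theorem norm_sq_le_mul_inner_of_lipschitz_gradient [CompleteSpace E]
    {L : ℝ} (hL : 0 < L) (hgrad : ∀ x, HasGradientAt g (g' x) x)
    (hconv : ∀ y z, g y + ⟪g' y, z - y⟫ ≤ g z) (hsmooth : ∀ u w, ‖g' u - g' w‖ ≤ L * ‖u - w‖)
    {x₀ : E} (hx₀ : g' x₀ = 0) (y : E) :
    ‖g' y‖ ^ 2 ≤ L * ⟪g' y, y - x₀⟫ := by
  have hstep : ∀ w v, g (w + L⁻¹ • v) ≤ g w + L⁻¹ * ⟪g' w, v⟫ + L⁻¹ / 2 * ‖v‖ ^ 2 := by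
    intro w v
    have := le_add_inner_add_of_lipschitz_gradient hgrad hsmooth w (L⁻¹ • v)
    rw [inner_smul_right, norm_smul, Real.norm_of_nonneg (inv_nonneg.mpr hL.le)] at this
    convert this using 2
    field_simp
  have hmin : g x₀ ≤ g (y + L⁻¹ • -g' y) := by simpa [hx₀] using hconv x₀ (y + L⁻¹ • -g' y)
  have h1 := hmin.trans (hstep y (-g' y))
  have h2 := (hconv y (x₀ + L⁻¹ • g' y)).trans (hstep x₀ (g' y))
  rw [inner_neg_right, real_inner_self_eq_norm_sq, norm_neg] at h1
  rw [show x₀ + L⁻¹ • g' y - y = L⁻¹ • g' y - (y - x₀) by abel, inner_sub_right,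
    inner_smul_right, real_inner_self_eq_norm_sq, hx₀, inner_zero_left] at h2
  rw [← inv_mul_le_iff₀ hL]
  linarith

theorem inexact_step_bound {μ L c a d e G I J : ℝ} (hμ : 0 < μ) (hL : 0 < L) (hc : 0 ≤ c)
    (hcL : c * (L + μ) ≤ 3 / 4) (hd : 0 ≤ d) (hI1 : μ * a ^ 2 ≤ I)
    (hI2 : G ^ 2 ≤ L * I) (hJ : J ≤ e * a) (hde : d ≤ G + e) :
    μ / 2 * a ^ 2 + c * d ^ 2 ≤ 2 * (I - J) + 4 / μ * e ^ 2 := by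
  have hJ' : 2 * J ≤ μ / 2 * a ^ 2 + 2 / μ * e ^ 2 := by
    have hsq : 2 / μ * (μ / 2 * a - e) ^ 2 = μ / 2 * a ^ 2 - 2 * e * a + 2 / μ * e ^ 2 := by
      field_simp; ring
    nlinarith [hsq, (by positivity : 0 ≤ 2 / μ * (μ / 2 * a - e) ^ 2)]
  have hsq : (L + μ) * (G ^ 2 / L + e ^ 2 / μ) - (G + e) ^ 2 = (μ * G - L * e) ^ 2 / (L * μ) := by
    field_simp; ring
  have hd2 : d ^ 2 ≤ (L + μ) * (G ^ 2 / L + e ^ 2 / μ) := by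
    have : 0 ≤ (μ * G - L * e) ^ 2 / (L * μ) := by positivity
    nlinarith [pow_le_pow_left₀ hd hde 2]
  have hG : G ^ 2 / L ≤ I := by rw [div_le_iff₀ hL]; linarith
  have hcd : c * d ^ 2 ≤ 3 / 4 * (I + e ^ 2 / μ) := calc
    c * d ^ 2 ≤ c * ((L + μ) * (G ^ 2 / L + e ^ 2 / μ)) := mul_le_mul_of_nonneg_left hd2 hc
    _ = c * (L + μ) * (G ^ 2 / L + e ^ 2 / μ) := by ring
    _ ≤ 3 / 4 * (I + e ^ 2 / μ) := mul_le_mul hcL (by gcongr) (by positivity) (by norm_num)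
  have hI : 0 ≤ I := le_trans (by positivity) hI1
  have he : 0 ≤ e ^ 2 / μ := by positivity
  have h2 : 2 / μ * e ^ 2 = 2 * (e ^ 2 / μ) := by ring
  have h4 : 4 / μ * e ^ 2 = 4 * (e ^ 2 / μ) := by ring
  linarith

theorem norm_sub_smul_sq_le {μ L lam β : ℝ} (hμ : 0 < μ) (hL : 0 < L) (hlam : 0 < lam)
    (hlam' : lam ≤ 1 / (2 * L + 2 * μ)) (hβ : 0 < β) (hβ' : β < 1) {r G D : E}
    (hmono : μ * ‖r‖ ^ 2 ≤ ⟪G, r⟫) (hcoco : ‖G‖ ^ 2 ≤ L * ⟪G, r⟫) :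
    ‖r - (lam * β) • D‖ ^ 2 ≤ (1 - μ / 2 * lam * β) * ‖r‖ ^ 2
      - 1 / 2 * lam ^ 2 * β * ‖D‖ ^ 2 + 4 / μ * lam * β * ‖G - D‖ ^ 2 := by
  have hexp : ‖r - (lam * β) • D‖ ^ 2
      = ‖r‖ ^ 2 - 2 * (lam * β) * (⟪G, r⟫ - ⟪G - D, r⟫) + (lam * β) ^ 2 * ‖D‖ ^ 2 := by
    rw [norm_sub_sq_real, inner_smul_right, norm_smul, inner_sub_left, real_inner_comm D r,
      Real.norm_of_nonneg (by positivity)]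
    ring
  have hc : (lam * β + lam / 2) * (L + μ) ≤ 3 / 4 := by
    rw [le_div_iff₀ (by positivity)] at hlam'
    nlinarith
  have hde : ‖D‖ ≤ ‖G‖ + ‖G - D‖ := by
    simpa using norm_sub_le G (G - D)
  have key := inexact_step_bound hμ hL (by positivity) hc (norm_nonneg D) hmono hcoco
    (real_inner_le_norm (G - D) r) hde
  rw [hexp]
  linear_combination (lam * β) * key

end InnerProductSpace

theorem stmt_3 {q : ℕ} (g : EuclideanSpace ℝ (Fin q) → ℝ)
    (gradg : EuclideanSpace ℝ (Fin q) → EuclideanSpace ℝ (Fin q))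
    (hgrad : ∀ y, HasGradientAt g (gradg y) y)
    (μ L : ℝ) (hμ : 0 < μ)
    (hsc : ∀ y z, g z ≥ g y + ⟪gradg y, z - y⟫ + (μ / 2) * ‖z - y‖ ^ 2)
    (hsmooth : ∀ u w, ‖gradg u - gradg w‖ ≤ L * ‖u - w‖)
    (ystar : EuclideanSpace ℝ (Fin q)) (hmin : ∀ z, g ystar ≤ g z)
    (lam β : ℝ) (hlam : 0 < lam) (hlam' : lam ≤ 1 / (2 * L + 2 * μ))
    (hβ : 0 < β) (hβ' : β < 1)
    (y D yp : EuclideanSpace ℝ (Fin q)) (hyp : yp = y - (lam * β) • D) :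
    ‖yp - ystar‖ ^ 2 ≤ (1 - (μ / 2) * lam * β) * ‖y - ystar‖ ^ 2
      - (1 / 2) * lam ^ 2 * β * ‖D‖ ^ 2 + (4 / μ) * lam * β * ‖gradg y - D‖ ^ 2 := by
  rcases subsingleton_or_nontrivial (EuclideanSpace ℝ (Fin q)) with _ | _
  · simp [norm_of_subsingleton]
  have hL : 0 < L := hμ.trans_le (le_of_strongConvex_of_lipschitz_gradient hsc hsmooth)
  have hconv : ∀ y z, g y + ⟪gradg y, z - y⟫ ≤ g z := fun y z => by
    linarith [hsc y z, (by positivity : 0 ≤ μ / 2 * ‖z - y‖ ^ 2)]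
  have hzero : gradg ystar = 0 := IsLocalMin.hasGradientAt_eq_zero_s3 (.of_forall hmin) (hgrad ystar)
  have hmono := mul_norm_sub_sq_le_inner_sub_of_strongConvex hsc y ystar
  rw [hzero, sub_zero] at hmono
  rw [hyp, sub_right_comm]
  exact norm_sub_smul_sq_le hμ hL hlam hlam' hβ hβ' hmono
    (norm_sq_le_mul_inner_of_lipschitz_gradient hL hgrad hconv hsmooth hzero y)
end

section
/- Let Ω = {v ∈ ℝᵠ : ‖v‖ ≤ M} with M > 0, and let A be a symmetric q×q matrix with μI ⪯ A ⪯ LI (0 < μ ≤ L), and b ∈ ℝᵠ with v* := A⁻¹b satisfying ‖v*‖ ≤ M. Let 0 < λ ≤ 1/(2L + 2μ), 0 < η < 1, v ∈ Ω, and D ∈ ℝᵠ, and set v⁺ = proj_Ω(v - λη D). Then ‖v⁺ - v*‖² ≤ (1 - (μ/2)λη)‖v - v*‖² - (λ²η/2)‖D‖² + (4/μ)λη‖Av - b - D‖². -/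
open scoped RealInnerProductSpace

set_option maxHeartbeats 2000000


lemma opbound_aux {q : ℕ}
    (A : EuclideanSpace ℝ (Fin q) →L[ℝ] EuclideanSpace ℝ (Fin q))
    (μ L : ℝ) (hμ : 0 < μ) (hμL : μ ≤ L)
    (hsym : ∀ u w, ⟪A u, w⟫ = ⟪u, A w⟫)
    (hlow : ∀ v, μ * ‖v‖ ^ 2 ≤ ⟪A v, v⟫)
    (hup : ∀ v, ⟪A v, v⟫ ≤ L * ‖v‖ ^ 2)
    (x : EuclideanSpace ℝ (Fin q)) : ‖A x‖ ^ 2 ≤ L * ⟪A x, x⟫ := by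
  have hK : (0:ℝ) ≤ ⟪A x, x⟫ := le_trans (by positivity) (hlow x)
  by_cases hN : ‖A x‖ = 0
  · rw [hN]
    nlinarith
  · have hN' : 0 < ‖A x‖ ^ 2 := by positivity
    have hP : μ * ‖A x‖ ^ 2 ≤ ⟪A (A x), A x⟫ := hlow (A x)
    have hPpos : 0 < ⟪A (A x), A x⟫ := lt_of_lt_of_le (by positivity) hP
    have hexp : ∀ (c d : ℝ), ⟪A (c • x - d • A x), c • x - d • A x⟫
        = c^2 * ⟪A x, x⟫ - 2*c*d*‖A x‖^2 + d^2 * ⟪A (A x), A x⟫ := by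
      intro c d
      have h1 : ⟪A (A x), x⟫ = ‖A x‖ ^ 2 := by
        rw [hsym (A x) x, real_inner_self_eq_norm_sq]
      have h2 : ⟪A x, A x⟫ = ‖A x‖ ^ 2 := real_inner_self_eq_norm_sq (A x)
      simp only [map_sub, map_smul, inner_sub_left, inner_sub_right,
        real_inner_smul_left, real_inner_smul_right, h1, h2]
      ring
    have h0 : (0:ℝ) ≤ ⟪A (⟪A (A x), A x⟫ • x - ‖A x‖^2 • A x),
        ⟪A (A x), A x⟫ • x - ‖A x‖^2 • A x⟫ := le_trans (by positivity) (hlow _)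
    rw [hexp] at h0
    have hKP : ‖A x‖^2 * ‖A x‖^2 ≤ ⟪A x, x⟫ * ⟪A (A x), A x⟫ := by nlinarith
    have hupy : ⟪A (A x), A x⟫ ≤ L * ‖A x‖ ^ 2 := hup (A x)
    nlinarith [mul_le_mul_of_nonneg_left hupy hK]

lemma young_aux (μ c a e I : ℝ) (hμ : 0 < μ) (hc : μ * c = 2) (hI : I ≤ a * e)
    (ha : 0 ≤ a) (he : 0 ≤ e) :
    2 * I ≤ (μ / 2) * a ^ 2 + c * e ^ 2 := by
  nlinarith [sq_nonneg (μ * a - 2 * e), mul_nonneg hμ.le (sub_nonneg.mpr hI),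
    sq_nonneg e, sq_nonneg a, hμ]

lemma arith_aux (μ L lam η X S E DD G I V W c : ℝ)
    (hμ : 0 < μ) (hμL : μ ≤ L) (hlam : 0 < lam) (hη : 0 < η) (hη' : η < 1)
    (hlam2 : lam * (2 * L + 2 * μ) ≤ 1)
    (hc : μ * c = 2)
    (hX0 : 0 ≤ X) (hE0 : 0 ≤ E) (hDD0 : 0 ≤ DD) (hG0 : 0 ≤ G)
    (hne : V ≤ W)
    (hexp : W = X - 2 * ((lam * η) * (S - I)) + (lam * η) ^ 2 * DD)
    (hS1 : μ * X ≤ S)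
    (hG : G ≤ L * S)
    (hI : 2 * I ≤ (μ / 2) * X + c * E)
    (hF6 : DD ≤ (4 / 3) * G + 4 * E) :
    V ≤ (1 - μ / 2 * lam * η) * X - lam ^ 2 * η / 2 * DD + 2 * c * lam * η * E := by
  have hS0 : 0 ≤ S := le_trans (by positivity) hS1
  have ht : 0 < lam * η := mul_pos hlam hη
  have h2L : 2 * lam * L ≤ 1 := by nlinarith [mul_pos hlam hμ]
  have h6 : 6 * lam ≤ c := by
    nlinarith [mul_nonneg hlam.le (sub_nonneg.mpr hμL)]
  have a1 : lam * DD ≤ lam * ((4 / 3) * G + 4 * E) :=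
    mul_le_mul_of_nonneg_left hF6 hlam.le
  have a2 : lam * G ≤ lam * (L * S) := mul_le_mul_of_nonneg_left hG hlam.le
  have a3 : 2 * lam * L * S ≤ S := by
    nlinarith [mul_nonneg (sub_nonneg.mpr h2L) hS0]
  have a4 : 6 * lam * E ≤ c * E := mul_le_mul_of_nonneg_right h6 hE0
  have hmid : (3 / 2) * lam * DD ≤ 2 * S - μ * X + c * E := by
    nlinarith [a1, a2, a3, a4, hS1]
  have b1 : (lam * η) * ((3 / 2) * lam * DD) ≤ (lam * η) * (2 * S - μ * X + c * E) :=
    mul_le_mul_of_nonneg_left hmid ht.le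
  have b2 : (lam * η) * (2 * I) ≤ (lam * η) * ((μ / 2) * X + c * E) :=
    mul_le_mul_of_nonneg_left hI ht.le
  have t2 : (lam * η) ^ 2 ≤ lam ^ 2 * η := by
    nlinarith [mul_pos (mul_pos hlam hlam) hη]
  have b3 : (lam * η) ^ 2 * DD ≤ (lam ^ 2 * η) * DD := mul_le_mul_of_nonneg_right t2 hDD0
  nlinarith [b1, b2, b3, hne]

theorem stmt_6 {q : ℕ} (M : ℝ) (hM : 0 < M)
    (A : EuclideanSpace ℝ (Fin q) →L[ℝ] EuclideanSpace ℝ (Fin q))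
    (μ L : ℝ) (hμ : 0 < μ) (hμL : μ ≤ L)
    (hsym : ∀ u w, ⟪A u, w⟫ = ⟪u, A w⟫)
    (hlow : ∀ v, μ * ‖v‖ ^ 2 ≤ ⟪A v, v⟫)
    (hup : ∀ v, ⟪A v, v⟫ ≤ L * ‖v‖ ^ 2)
    (b vstar : EuclideanSpace ℝ (Fin q)) (hvstar : A vstar = b)
    (hvstarM : ‖vstar‖ ≤ M)
    (lam η : ℝ) (hlam : 0 < lam) (hlam' : lam ≤ 1 / (2 * L + 2 * μ))
    (hη : 0 < η) (hη' : η < 1)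
    (v D vp : EuclideanSpace ℝ (Fin q)) (hv : ‖v‖ ≤ M)
    (hproj : vp = if ‖v - (lam * η) • D‖ ≤ M then v - (lam * η) • D
        else (M / ‖v - (lam * η) • D‖) • (v - (lam * η) • D)) :
    ‖vp - vstar‖ ^ 2 ≤ (1 - (μ / 2) * lam * η) * ‖v - vstar‖ ^ 2
      - (lam ^ 2 * η / 2) * ‖D‖ ^ 2 + (4 / μ) * lam * η * ‖A v - b - D‖ ^ 2 := by
  -- rewrite A v - b in the goal
  have hgb : A v - b = A (v - vstar) := by rw [map_sub, hvstar]
  rw [hgb]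
  -- notation
  set x : EuclideanSpace ℝ (Fin q) := v - vstar with hx
  set g : EuclideanSpace ℝ (Fin q) := A x with hgdef
  set e : EuclideanSpace ℝ (Fin q) := g - D with he
  have hc : μ * (2 / μ) = 2 := by field_simp
  -- nonexpansiveness of the projection
  have hne : ‖vp - vstar‖ ^ 2 ≤ ‖v - (lam * η) • D - vstar‖ ^ 2 := by
    rw [hproj]
    split_ifs with h
    · exact le_rfl
    · push_neg at h
      set w : EuclideanSpace ℝ (Fin q) := v - (lam * η) • D with hw
      have hw0 : 0 < ‖w‖ := hM.trans h
      have hcc : (M / ‖w‖) * ‖w‖ = M := div_mul_cancel₀ M (ne_of_gt hw0)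
      have hc1 : M / ‖w‖ < 1 := (div_lt_one hw0).mpr h
      have hc0 : 0 ≤ M / ‖w‖ := by positivity
      have hcs : ⟪w, vstar⟫ ≤ ‖w‖ * M := by
        have h1 : ⟪w, vstar⟫ ≤ ‖w‖ * ‖vstar‖ := real_inner_le_norm w vstar
        nlinarith
      have e1 : ‖(M / ‖w‖) • w - vstar‖ ^ 2
          = (M / ‖w‖) ^ 2 * ‖w‖ ^ 2 - 2 * ((M / ‖w‖) * ⟪w, vstar⟫) + ‖vstar‖ ^ 2 := by
        rw [norm_sub_sq_real, norm_smul, Real.norm_eq_abs, abs_of_nonneg hc0,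
          real_inner_smul_left, mul_pow]
      have e2 : ‖w - vstar‖ ^ 2 = ‖w‖ ^ 2 - 2 * ⟪w, vstar⟫ + ‖vstar‖ ^ 2 :=
        norm_sub_sq_real w vstar
      rw [e1, e2]
      nlinarith [mul_nonneg (sub_nonneg.mpr hc1.le) (sub_nonneg.mpr hcs),
        sq_nonneg (‖w‖ - M), hcc, hw0]
  -- expansion of the squared distance
  have hxw : v - (lam * η) • D - vstar = x - (lam * η) • D := by
    rw [hx]; abel
  have hexp : ‖v - (lam * η) • D - vstar‖ ^ 2
      = ‖x‖ ^ 2 - 2 * ((lam * η) * (⟪x, g⟫ - ⟪x, e⟫)) + (lam * η) ^ 2 * ‖D‖ ^ 2 := by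
    rw [hxw, norm_sub_sq_real, real_inner_smul_right, norm_smul, Real.norm_eq_abs,
      mul_pow, sq_abs]
    have hxD : ⟪x, D⟫ = ⟪x, g⟫ - ⟪x, e⟫ := by
      rw [he, inner_sub_right]; ring
    rw [hxD]
  -- basic inequalities
  have hS1 : μ * ‖x‖ ^ 2 ≤ ⟪x, g⟫ := by
    have h1 := hlow x
    rwa [real_inner_comm] at h1
  have hG : ‖g‖ ^ 2 ≤ L * ⟪x, g⟫ := by
    have h1 := opbound_aux A μ L hμ hμL hsym hlow hup x
    rwa [real_inner_comm] at h1
  have hF3 : 2 * ⟪x, e⟫ ≤ (μ / 2) * ‖x‖ ^ 2 + (2 / μ) * ‖e‖ ^ 2 :=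
    young_aux μ (2 / μ) ‖x‖ ‖e‖ ⟪x, e⟫ hμ hc (real_inner_le_norm x e)
      (norm_nonneg x) (norm_nonneg e)
  have hF6 : ‖D‖ ^ 2 ≤ (4 / 3) * ‖g‖ ^ 2 + 4 * ‖e‖ ^ 2 := by
    have hD' : D = g - e := by rw [he]; abel
    have h1 : ‖D‖ ≤ ‖g‖ + ‖e‖ := by
      calc ‖D‖ = ‖g - e‖ := by rw [← hD']
        _ ≤ ‖g‖ + ‖e‖ := norm_sub_le g e
    have h2 : ‖D‖ * ‖D‖ ≤ (‖g‖ + ‖e‖) * (‖g‖ + ‖e‖) :=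
      mul_le_mul h1 h1 (norm_nonneg D) (by positivity)
    nlinarith [sq_nonneg (‖g‖ - 3 * ‖e‖)]
  have hlam2 : lam * (2 * L + 2 * μ) ≤ 1 := by
    have hpos : 0 < 2 * L + 2 * μ := by linarith
    exact (le_div_iff₀ hpos).mp hlam'
  have hkey := arith_aux μ L lam η (‖x‖ ^ 2) ⟪x, g⟫ (‖e‖ ^ 2) (‖D‖ ^ 2) (‖g‖ ^ 2)
    ⟪x, e⟫ (‖vp - vstar‖ ^ 2) (‖v - (lam * η) • D - vstar‖ ^ 2) (2 / μ)
    hμ hμL hlam hη hη' hlam2 hc (by positivity) (by positivity) (by positivity)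
    (by positivity) hne hexp hS1 hG hF3 hF6
  have h4 : 2 * (2 / μ) * lam * η * ‖e‖ ^ 2 = 4 / μ * lam * η * ‖e‖ ^ 2 := by
    ring
  linarith [hkey, h4.le, h4.ge]
end

section
/- Let f : ℝᵖ × ℝᵠ → ℝ and g : ℝᵖ × ℝᵠ → ℝ satisfy: ‖∇_y f‖ ≤ C_f everywhere, ∇_y f is L_f-Lipschitz, ∇²_{yy} g(x, y) ⪰ μI for all (x, y), ∇²_{yy} g is L_{gyy}-Lipschitz in (x, y), and let y*(x) be the minimizer of g(x, ·), which is C_y-Lipschitz. Then v*(x) := [∇²_{yy} g(x, y*(x))]⁻¹ ∇_y f(x, y*(x)) satisfies ‖v*(x₁) - v*(x₂)‖ ≤ (L_f/μ + C_f L_{gyy}/μ²)(1 + C_y)‖x₁ - x₂‖ for all x₁, x₂. -/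
/-!
Write `Aᵢ = ∇²_{yy} g(xᵢ, y*(xᵢ))`, `bᵢ = ∇_y f(xᵢ, y*(xᵢ))`, so that `Aᵢ v*(xᵢ) = bᵢ`. Then
`A₁ (v₁ - v₂) = (b₁ - b₂) - (A₁ - A₂) v₂`, and strong monotonicity of `A₁`, `A₂` gives
`‖v₁ - v₂‖ ≤ ‖b₁ - b₂‖ / μ + ‖A₁ - A₂‖ ‖b₂‖ / μ²`. Both differences are bounded by their
Lipschitz constants times the distance between `(x₁, y*(x₁))` and `(x₂, y*(x₂))`, which is at
most `(1 + C_y) ‖x₁ - x₂‖`.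
-/

open scoped RealInnerProductSpace

section StronglyMonotone

variable {E : Type*} [NormedAddCommGroup E] [InnerProductSpace ℝ E]

theorem mul_norm_le_norm_of_mul_sq_le_inner {μ : ℝ} {u v : E}
    (h : μ * ‖v‖ ^ 2 ≤ ⟪u, v⟫) : μ * ‖v‖ ≤ ‖u‖ := by
  rcases (norm_nonneg v).eq_or_lt with hv | hv
  · simp [← hv]
  · refine le_of_mul_le_mul_right ?_ hv
    calc μ * ‖v‖ * ‖v‖ = μ * ‖v‖ ^ 2 := by ring
      _ ≤ ⟪u, v⟫ := h
      _ ≤ ‖u‖ * ‖v‖ := real_inner_le_norm u v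

theorem norm_sub_le_of_strongly_monotone {μ : ℝ} (hμ : 0 < μ) {A₁ A₂ : E →L[ℝ] E}
    (hA₁ : ∀ v, μ * ‖v‖ ^ 2 ≤ ⟪A₁ v, v⟫) (hA₂ : ∀ v, μ * ‖v‖ ^ 2 ≤ ⟪A₂ v, v⟫) (v₁ v₂ : E) :
    ‖v₁ - v₂‖ ≤ ‖A₁ v₁ - A₂ v₂‖ / μ + ‖A₁ - A₂‖ * ‖A₂ v₂‖ / μ ^ 2 := by
  have hv₂ : ‖v₂‖ ≤ ‖A₂ v₂‖ / μ := by
    rw [le_div_iff₀' hμ]; exact mul_norm_le_norm_of_mul_sq_le_inner (hA₂ v₂)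
  have hdiff : A₁ (v₁ - v₂) = (A₁ v₁ - A₂ v₂) - (A₁ - A₂) v₂ := by
    rw [map_sub, sub_apply]; abel
  have hmain : μ * ‖v₁ - v₂‖ ≤ ‖A₁ v₁ - A₂ v₂‖ + ‖A₁ - A₂‖ * ‖A₂ v₂‖ / μ :=
    calc μ * ‖v₁ - v₂‖ ≤ ‖A₁ (v₁ - v₂)‖ := mul_norm_le_norm_of_mul_sq_le_inner (hA₁ _)
      _ ≤ ‖A₁ v₁ - A₂ v₂‖ + ‖A₁ - A₂‖ * ‖v₂‖ := by
        rw [hdiff]; exact (norm_sub_le _ _).trans (by gcongr; exact (A₁ - A₂).le_opNorm v₂)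
      _ ≤ ‖A₁ v₁ - A₂ v₂‖ + ‖A₁ - A₂‖ * ‖A₂ v₂‖ / μ := by
        rw [mul_div_assoc]; gcongr
  calc ‖v₁ - v₂‖ ≤ (‖A₁ v₁ - A₂ v₂‖ + ‖A₁ - A₂‖ * ‖A₂ v₂‖ / μ) / μ := by
        rwa [le_div_iff₀' hμ]
    _ = ‖A₁ v₁ - A₂ v₂‖ / μ + ‖A₁ - A₂‖ * ‖A₂ v₂‖ / μ ^ 2 := by ring

end StronglyMonotone

theorem Real.sqrt_sq_add_sq_le_of_le_mul {a b C : ℝ} (ha : 0 ≤ a) (hb : 0 ≤ b)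
    (hba : b ≤ C * a) : √(a ^ 2 + b ^ 2) ≤ (1 + C) * a := by
  have hCa : 0 ≤ C * a := hb.trans hba
  rw [Real.sqrt_le_left (by nlinarith)]
  nlinarith

theorem stmt_9 {p q : ℕ}
    (gradyf : EuclideanSpace ℝ (Fin p) → EuclideanSpace ℝ (Fin q) →
      EuclideanSpace ℝ (Fin q))
    (Cf Lf μ Lgyy Cy : ℝ) (hμ : 0 < μ)
    (hbound : ∀ x y, ‖gradyf x y‖ ≤ Cf)
    (hLipf : ∀ x₁ y₁ x₂ y₂, ‖gradyf x₁ y₁ - gradyf x₂ y₂‖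
      ≤ Lf * Real.sqrt (‖x₁ - x₂‖ ^ 2 + ‖y₁ - y₂‖ ^ 2))
    (H : EuclideanSpace ℝ (Fin p) → EuclideanSpace ℝ (Fin q) →
      (EuclideanSpace ℝ (Fin q) →L[ℝ] EuclideanSpace ℝ (Fin q)))
    (hHlow : ∀ x y v, μ * ‖v‖ ^ 2 ≤ ⟪H x y v, v⟫)
    (hHLip : ∀ x₁ y₁ x₂ y₂, ‖H x₁ y₁ - H x₂ y₂‖
      ≤ Lgyy * Real.sqrt (‖x₁ - x₂‖ ^ 2 + ‖y₁ - y₂‖ ^ 2))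
    (ystar : EuclideanSpace ℝ (Fin p) → EuclideanSpace ℝ (Fin q))
    (hystar : ∀ x₁ x₂, ‖ystar x₁ - ystar x₂‖ ≤ Cy * ‖x₁ - x₂‖)
    (vstar : EuclideanSpace ℝ (Fin p) → EuclideanSpace ℝ (Fin q))
    (hvstar : ∀ x, H x (ystar x) (vstar x) = gradyf x (ystar x)) :
    ∀ x₁ x₂, ‖vstar x₁ - vstar x₂‖
      ≤ (Lf / μ + Cf * Lgyy / μ ^ 2) * (1 + Cy) * ‖x₁ - x₂‖ := by
  intro x₁ x₂
  rcases eq_or_ne x₁ x₂ with rfl | hx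
  · simp
  -- `Lf` and `Lgyy` are not assumed nonnegative; a positive distance `S` forces them to be.
  set S := √(‖x₁ - x₂‖ ^ 2 + ‖ystar x₁ - ystar x₂‖ ^ 2)
  have hS : 0 < S := Real.sqrt_pos.mpr (by positivity [sub_ne_zero.mpr hx])
  have hb := hLipf x₁ (ystar x₁) x₂ (ystar x₂)
  have hA := hHLip x₁ (ystar x₁) x₂ (ystar x₂)
  have hLf : 0 ≤ Lf := nonneg_of_mul_nonneg_left ((norm_nonneg _).trans hb) hS
  have hLgyy : 0 ≤ Lgyy := nonneg_of_mul_nonneg_left ((norm_nonneg _).trans hA) hS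
  have hCf : 0 ≤ Cf := (norm_nonneg _).trans (hbound x₁ (ystar x₁))
  calc ‖vstar x₁ - vstar x₂‖
      ≤ ‖gradyf x₁ (ystar x₁) - gradyf x₂ (ystar x₂)‖ / μ
        + ‖H x₁ (ystar x₁) - H x₂ (ystar x₂)‖ * ‖gradyf x₂ (ystar x₂)‖ / μ ^ 2 := by
        have h := norm_sub_le_of_strongly_monotone hμ (hHlow x₁ (ystar x₁))
          (hHlow x₂ (ystar x₂)) (vstar x₁) (vstar x₂)
        rwa [hvstar, hvstar] at h
    _ ≤ Lf * S / μ + Lgyy * S * Cf / μ ^ 2 := by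
        gcongr
        exact hbound _ _
    _ = (Lf / μ + Cf * Lgyy / μ ^ 2) * S := by ring
    _ ≤ (Lf / μ + Cf * Lgyy / μ ^ 2) * (1 + Cy) * ‖x₁ - x₂‖ := by
        rw [mul_assoc]
        gcongr
        exact Real.sqrt_sq_add_sq_le_of_le_mul (norm_nonneg _) (norm_nonneg _) (hystar x₁ x₂)
end

section
/- Suppose ∇_x f is L_f-Lipschitz, ∇_x∇_y g is L_{gxy}-Lipschitz, ‖∇_x∇_y g(x, y)‖ ≤ L_g for all (x, y), and ‖v*(x)‖ ≤ M where v*(x) = [∇²_{yy} g(x, y*(x))]⁻¹∇_y f(x, y*(x)). Define D_x(x, y, v) = ∇_x f(x, y) - ∇_x∇_y g(x, y)·v and ∇Φ(x) = ∇_x f(x, y*(x)) - ∇_x∇_y g(x, y*(x))·v*(x). Then for all x, y, v: ‖∇Φ(x) - D_x(x, y, v)‖² ≤ (2L_f² + 4M²L_{gxy}²)‖y - y*(x)‖² + 4L_g²‖v - v*(x)‖². -/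
theorem stmt_10 {p q : ℕ}
    (gradxf : EuclideanSpace ℝ (Fin p) → EuclideanSpace ℝ (Fin q) →
      EuclideanSpace ℝ (Fin p))
    (J : EuclideanSpace ℝ (Fin p) → EuclideanSpace ℝ (Fin q) →
      (EuclideanSpace ℝ (Fin q) →L[ℝ] EuclideanSpace ℝ (Fin p)))
    (Lf Lgxy Lg M : ℝ)
    (hLipf : ∀ x₁ y₁ x₂ y₂, ‖gradxf x₁ y₁ - gradxf x₂ y₂‖
      ≤ Lf * Real.sqrt (‖x₁ - x₂‖ ^ 2 + ‖y₁ - y₂‖ ^ 2))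
    (hJLip : ∀ x₁ y₁ x₂ y₂, ‖J x₁ y₁ - J x₂ y₂‖
      ≤ Lgxy * Real.sqrt (‖x₁ - x₂‖ ^ 2 + ‖y₁ - y₂‖ ^ 2))
    (hJbound : ∀ x y, ‖J x y‖ ≤ Lg)
    (ystar : EuclideanSpace ℝ (Fin p) → EuclideanSpace ℝ (Fin q))
    (vstar : EuclideanSpace ℝ (Fin p) → EuclideanSpace ℝ (Fin q))
    (hvstarM : ∀ x, ‖vstar x‖ ≤ M) :
    ∀ (x : EuclideanSpace ℝ (Fin p)) (y v : EuclideanSpace ℝ (Fin q)),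
      ‖(gradxf x (ystar x) - J x (ystar x) (vstar x))
        - (gradxf x y - J x y v)‖ ^ 2
      ≤ (2 * Lf ^ 2 + 4 * M ^ 2 * Lgxy ^ 2) * ‖y - ystar x‖ ^ 2
        + 4 * Lg ^ 2 * ‖v - vstar x‖ ^ 2 := by
  intro x y v
  have hsq : ∀ a : EuclideanSpace ℝ (Fin q), ∀ b : EuclideanSpace ℝ (Fin q),
      Real.sqrt (‖(0 : EuclideanSpace ℝ (Fin p))‖ ^ 2 + ‖a - b‖ ^ 2) = ‖a - b‖ := by
    intro a b
    rw [norm_zero]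
    simp [Real.sqrt_sq (norm_nonneg _)]
  have hA : ‖gradxf x (ystar x) - gradxf x y‖ ≤ Lf * ‖y - ystar x‖ := by
    have := hLipf x (ystar x) x y
    rw [sub_self, hsq] at this
    rwa [norm_sub_rev (ystar x) y] at this
  have hJd : ‖J x y - J x (ystar x)‖ ≤ Lgxy * ‖y - ystar x‖ := by
    have := hJLip x y x (ystar x)
    rwa [sub_self, hsq] at this
  have hC : ‖(J x y - J x (ystar x)) (vstar x)‖ ≤ Lgxy * ‖y - ystar x‖ * M := by
    calc ‖(J x y - J x (ystar x)) (vstar x)‖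
        ≤ ‖J x y - J x (ystar x)‖ * ‖vstar x‖ := ContinuousLinearMap.le_opNorm _ _
      _ ≤ (Lgxy * ‖y - ystar x‖) * M := by
          apply mul_le_mul hJd (hvstarM x) (norm_nonneg _)
          exact le_trans (norm_nonneg _) hJd
  have hB : ‖J x y (v - vstar x)‖ ≤ Lg * ‖v - vstar x‖ := by
    calc ‖J x y (v - vstar x)‖ ≤ ‖J x y‖ * ‖v - vstar x‖ :=
          ContinuousLinearMap.le_opNorm _ _
      _ ≤ Lg * ‖v - vstar x‖ :=
          mul_le_mul_of_nonneg_right (hJbound x y) (norm_nonneg _)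
  have hdecomp : (gradxf x (ystar x) - J x (ystar x) (vstar x))
        - (gradxf x y - J x y v)
      = (gradxf x (ystar x) - gradxf x y) + J x y (v - vstar x)
        + (J x y - J x (ystar x)) (vstar x) := by
    simp only [map_sub, ContinuousLinearMap.sub_apply]
    abel
  have hT : ‖(gradxf x (ystar x) - J x (ystar x) (vstar x))
        - (gradxf x y - J x y v)‖
      ≤ ‖gradxf x (ystar x) - gradxf x y‖ + ‖J x y (v - vstar x)‖
        + ‖(J x y - J x (ystar x)) (vstar x)‖ := by
    rw [hdecomp]
    exact norm_add₃_le
  have h0 : (0:ℝ) ≤ ‖(gradxf x (ystar x) - J x (ystar x) (vstar x))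
        - (gradxf x y - J x y v)‖ := norm_nonneg _
  have hAn : (0:ℝ) ≤ ‖gradxf x (ystar x) - gradxf x y‖ := norm_nonneg _
  have hBn : (0:ℝ) ≤ ‖J x y (v - vstar x)‖ := norm_nonneg _
  have hCn : (0:ℝ) ≤ ‖(J x y - J x (ystar x)) (vstar x)‖ := norm_nonneg _
  nlinarith [sq_nonneg (‖gradxf x (ystar x) - gradxf x y‖ - ‖J x y (v - vstar x)‖
      - ‖(J x y - J x (ystar x)) (vstar x)‖),
    sq_nonneg (‖J x y (v - vstar x)‖ - ‖(J x y - J x (ystar x)) (vstar x)‖),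
    mul_le_mul hA hA hAn (le_trans hAn hA),
    mul_le_mul hB hB hBn (le_trans hBn hB),
    mul_le_mul hC hC hCn (le_trans hCn hC),
    mul_le_mul hT hT h0 (le_trans h0 hT)]
end
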